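/- Let n ≥ 1 be an integer and let ξ ∈ ℂ satisfy ξ² = −2 − √(n²+4), where √(n²+4) denotes the positive real square root. Then the minimal polynomial of ξ over ℚ is X⁴ + 4X² − n²; in particular ξ has degree 4 over ℚ. -/

import Mathlib

/-!
Put `s = √(n² + 4)`, so `ξ² = -2 - s` is a root of `Y² + 4Y - n²` and `ξ` a root of
`X⁴ + 4X² - n²`. Since `n² < n² + 4 < (n + 2)²` and `n² + 4 ≠ (n + 1)²`, `s` is irrational, so
`ξ²` has degree `2` over `ℚ`; as `ξ² ∈ ℚ(ξ)`, the degree of `ξ` is even and at most `4`. It is not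
`2`: a relation `ξ² + bξ + c = 0` over `ℚ` forces `b = 0` on imaginary parts (`ξ²` is real but `ξ`
is not, `ξ²` being negative), and then `ξ² = -c` would be rational.
-/

open Polynomial IntermediateField

theorem Nat.not_isSquare_sq_add_four {n : ℕ} (hn : 0 < n) : ¬ IsSquare (n ^ 2 + 4) := by
  rintro ⟨m, hm⟩
  have h₁ : n < m := by nlinarith
  have h₂ : m < n + 2 := by nlinarith
  obtain rfl : m = n + 1 := by omega
  ring_nf at hm
  omega

theorem irrational_sqrt_sq_add_four {n : ℕ} (hn : 0 < n) : Irrational √((n : ℝ) ^ 2 + 4) := by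
  have := irrational_sqrt_natCast_iff.mpr (Nat.not_isSquare_sq_add_four hn)
  exact_mod_cast this

theorem minpoly.natDegree_dvd_of_mem_adjoin_simple {K L : Type*} [Field K] [Field L]
    [Algebra K L] {x y : L} (hx : IsIntegral K x) (hy : y ∈ K⟮x⟯) :
    (minpoly K y).natDegree ∣ (minpoly K x).natDegree := by
  have : FiniteDimensional K K⟮x⟯ := adjoin.finiteDimensional hx
  have hy' : IsIntegral K y :=
    (isIntegral_algHom_iff K⟮x⟯.val Subtype.val_injective).mpr (.of_finite K (⟨y, hy⟩ : K⟮x⟯))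
  rw [← adjoin.finrank hx, ← adjoin.finrank hy']
  exact finrank_dvd_of_le_right (adjoin_simple_le_iff.mpr hy)

theorem Complex.sq_mem_range_of_natDegree_minpoly_eq_two {z : ℂ} (hz : z.im ≠ 0)
    (hz2 : (z ^ 2).im = 0) (h : (minpoly ℚ z).natDegree = 2) :
    z ^ 2 ∈ (algebraMap ℚ ℂ).range := by
  have hint : IsIntegral ℚ z := minpoly.ne_zero_iff.mp (by rintro h0; simp [h0] at h)
  have hlead : (minpoly ℚ z).coeff 2 = 1 := h ▸ (minpoly.monic hint).leadingCoeff
  have hroot := minpoly.aeval ℚ z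
  rw [aeval_eq_sum_range, h] at hroot
  simp only [Finset.sum_range_succ, Finset.sum_range_zero, hlead] at hroot
  set b := (minpoly ℚ z).coeff 1
  set c := (minpoly ℚ z).coeff 0
  have hrel : (c : ℂ) + b * z + z ^ 2 = 0 := by simpa [Rat.smul_def] using hroot
  have hb : b = 0 := by
    have him := congrArg Complex.im hrel
    simp only [Complex.add_im, Complex.mul_im, Complex.ratCast_im, Complex.ratCast_re, zero_mul,
      hz2, add_zero, zero_add, Complex.zero_im] at him
    exact_mod_cast (mul_eq_zero.mp him).resolve_right hz
  refine ⟨-c, ?_⟩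
  rw [hb, Rat.cast_zero] at hrel
  rw [map_neg, eq_ratCast]
  linear_combination -hrel

namespace ScalingFactor

variable {n : ℕ} {ξ : ℂ} (hξ : ξ ^ 2 = -2 - ((Real.sqrt ((n : ℝ) ^ 2 + 4) : ℝ) : ℂ))
include hξ

theorem sq_sq_add_four_mul_sq_sub_sq_eq_zero : (ξ ^ 2) ^ 2 + 4 * ξ ^ 2 - (n : ℂ) ^ 2 = 0 := by
  have hs : ((√((n : ℝ) ^ 2 + 4) : ℝ) : ℂ) ^ 2 = (n : ℂ) ^ 2 + 4 := by
    rw [← Complex.ofReal_pow, Real.sq_sqrt (by positivity)]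
    push_cast
    ring
  rw [hξ]
  linear_combination hs

theorem sq_eq_ofReal : ξ ^ 2 = ((-2 - √((n : ℝ) ^ 2 + 4) : ℝ) : ℂ) := by
  push_cast
  exact hξ

theorem im_ne_zero : ξ.im ≠ 0 := by
  intro him
  have hre : ξ ^ 2 = ((ξ.re ^ 2 : ℝ) : ℂ) := by
    conv_lhs => rw [← Complex.re_add_im ξ, him]
    push_cast
    ring
  have := Complex.ofReal_injective (hre.symm.trans (sq_eq_ofReal hξ))
  nlinarith [sq_nonneg ξ.re, Real.sqrt_nonneg ((n : ℝ) ^ 2 + 4)]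

theorem sq_notMem_range (hn : 0 < n) : ξ ^ 2 ∉ (algebraMap ℚ ℂ).range := by
  rintro ⟨c, hc⟩
  apply irrational_sqrt_sq_add_four hn
  refine ⟨-2 - c, Complex.ofReal_injective ?_⟩
  rw [eq_ratCast] at hc
  push_cast
  linear_combination -hc - hξ

theorem natDegree_minpoly_sq (hn : 0 < n) : (minpoly ℚ (ξ ^ 2)).natDegree = 2 := by
  set q : ℚ[X] := X ^ 2 + C 4 * X - C ((n : ℚ) ^ 2)
  have hq : q.Monic := by unfold q; monicity!
  have hqdeg : q.natDegree = 2 := by unfold q; compute_degree!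
  have hroot : aeval (ξ ^ 2) q = 0 := by
    simp only [q, map_sub, map_add, map_mul, map_pow, aeval_X, aeval_C, eq_ratCast]
    push_cast
    exact sq_sq_add_four_mul_sq_sub_sq_eq_zero hξ
  have hle : (minpoly ℚ (ξ ^ 2)).natDegree ≤ 2 :=
    (natDegree_le_of_dvd (minpoly.dvd ℚ _ hroot) hq.ne_zero).trans hqdeg.le
  have hpos := minpoly.natDegree_pos (A := ℚ) ⟨q, hq, hroot⟩
  have hne : (minpoly ℚ (ξ ^ 2)).natDegree ≠ 1 :=
    fun h ↦ sq_notMem_range hξ hn (minpoly.natDegree_eq_one_iff.mp h)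
  omega

end ScalingFactor

open ScalingFactor in
theorem stmt_13 (n : ℕ) (hn : 1 ≤ n) (ξ : ℂ)
    (hξ : ξ ^ 2 = -2 - ((Real.sqrt ((n : ℝ) ^ 2 + 4) : ℝ) : ℂ)) :
    minpoly ℚ ξ = X ^ 4 + C 4 * X ^ 2 - C ((n : ℚ) ^ 2) ∧
    (minpoly ℚ ξ).natDegree = 4 := by
  set p : ℚ[X] := X ^ 4 + C 4 * X ^ 2 - C ((n : ℚ) ^ 2)
  have hp : p.Monic := by unfold p; monicity!
  have hpdeg : p.natDegree = 4 := by unfold p; compute_degree!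
  have hroot : aeval ξ p = 0 := by
    simp only [p, map_sub, map_add, map_mul, map_pow, aeval_X, aeval_C, eq_ratCast]
    push_cast
    linear_combination sq_sq_add_four_mul_sq_sub_sq_eq_zero hξ
  have hint : IsIntegral ℚ ξ := ⟨p, hp, hroot⟩
  have hdvd : minpoly ℚ ξ ∣ p := minpoly.dvd ℚ ξ hroot
  have hle : (minpoly ℚ ξ).natDegree ≤ 4 := hpdeg ▸ natDegree_le_of_dvd hdvd hp.ne_zero
  have hpos := minpoly.natDegree_pos hint
  have heven : 2 ∣ (minpoly ℚ ξ).natDegree := natDegree_minpoly_sq hξ hn ▸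
    minpoly.natDegree_dvd_of_mem_adjoin_simple hint (pow_mem (mem_adjoin_simple_self ℚ ξ) 2)
  have hne : (minpoly ℚ ξ).natDegree ≠ 2 := by
    intro h
    have hsq := Complex.sq_mem_range_of_natDegree_minpoly_eq_two (im_ne_zero hξ)
      (by rw [sq_eq_ofReal hξ, Complex.ofReal_im]) h
    exact sq_notMem_range hξ hn hsq
  have hdeg : (minpoly ℚ ξ).natDegree = 4 := by omega
  exact ⟨(eq_of_monic_of_dvd_of_natDegree_le (minpoly.monic hint) hp hdvd
    (by omega)).symm, hdeg⟩
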